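/- arXiv:1710.01021 — 2 statements merged into one kernel-verified Lean document; each statement's English description precedes it below -/
import Mathlib

section
/- Let K be a number field and let ξ ∈ O_K^{I_K} satisfy ξ_{q·b} ≡ ξ_b (mod q^{1+v_q(b)}) for all q ∈ P_K and all b ∈ I_K. Fix p ∈ P_K and set η := ψ_p ξ − ξ^{#k_p} ∈ O_K^{I_K}. Then for all a ∈ I_K: (i) η_{p·a} − η_a ∈ p^{2+v_p(a)}, and (ii) for every prime q ∈ P_K with q ≠ p, η_{q·a} − η_a ∈ q^{1+v_q(a)}. -/
/-!
With `N = #k_p`, `η_{b'} - η_b = (ξ_{p·b'} - ξ_{p·b}) - (ξ_{b'}^N - ξ_b^N)`. The first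
difference is the hypothesis applied at `p·b`, since `v_p(p·b) = 1 + v_p(b)` and
`v_q(p·b) = v_q(b)` for `q ≠ p`. For the second, `x ≡ y (mod p^{k+1})` gives
`x^N ≡ y^N (mod p^{k+2})`: `x^N - y^N = (x - y)·∑ x^i y^{N-1-i}`, and the sum is
`≡ N y^{N-1} ≡ 0 (mod p)` because `N`, the order of `k_p`, lies in `p`.
-/

open NumberField

noncomputable section

/-- The multiplicative monoid `I_K` of nonzero ideals of the ring of integers of `K`. -/
def IdealMonoid (K : Type) [Field K] [NumberField K] : Submonoid (Ideal (𝓞 K)) where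
  carrier := {I | I ≠ ⊥}
  mul_mem' := by
    intro a b ha hb h
    rcases Ideal.mul_eq_bot.mp h with h' | h'
    · exact ha h'
    · exact hb h'
  one_mem' := by
    simp only [Set.mem_setOf_eq, Ideal.one_eq_top]
    exact top_ne_bot

/-- `I_K`, the monoid of nonzero ideals, as a type. -/
abbrev IK (K : Type) [Field K] [NumberField K] := ↥(IdealMonoid K)

/-- `P_K`, the set of nonzero prime ideals of `𝓞 K`, as a type. -/
def PrimeIdeal (K : Type) [Field K] [NumberField K] :=
  {p : Ideal (𝓞 K) // p.IsPrime ∧ p ≠ ⊥}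

/-- A nonzero prime ideal, regarded as an element of `I_K`. -/
def PrimeIdeal.toIK {K : Type} [Field K] [NumberField K] (p : PrimeIdeal K) : IK K :=
  ⟨p.1, p.2.2⟩

/-- `#k_p`: the cardinality of the residue ring `R ⧸ p`. -/
def residueCard {R : Type} [CommRing R] (p : Ideal R) : ℕ :=
  Nat.card (R ⧸ p)

/-- The shift operator `ψ_a` on `A^{I_K}`: `(ψ_a ξ)_b = ξ_{a·b}`. -/
def shift {K : Type} [Field K] [NumberField K] {A : Type} (a : IK K)
    (ξ : IK K → A) : IK K → A :=
  fun b => ξ (a * b)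

/-- For an ideal `p` of `𝓞 K` and a subset `S ⊆ A^{I_K}`, the set `p·S` of all finite
sums of products of elements of `p` with elements of (the module generated by) `S`. -/
def idealMulSet {K : Type} [Field K] [NumberField K] {A : Type} [CommRing A]
    [Algebra (𝓞 K) A] (p : Ideal (𝓞 K)) (S : Set (IK K → A)) : Set (IK K → A) :=
  ↑(p • Submodule.span (𝓞 K) S)

/-- The descending chain `U_n(A)` of subsets of `A^{I_K}`. -/
def UnSet (K : Type) [Field K] [NumberField K] (A : Type) [CommRing A]
    [Algebra (𝓞 K) A] : ℕ → Set (IK K → A)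
  | 0 => Set.univ
  | n + 1 => {ξ | ξ ∈ UnSet K A n ∧ ∀ p : PrimeIdeal K,
      shift p.toIK ξ - ξ ^ residueCard p.1 ∈ idealMulSet p.1 (UnSet K A n)}

/-- The ring of Witt vectors `W_{O_K}(A) = ⋂ₙ U_n(A)`, as a subset of `A^{I_K}`. -/
def WittSet (K : Type) [Field K] [NumberField K] (A : Type) [CommRing A]
    [Algebra (𝓞 K) A] : Set (IK K → A) :=
  ⋂ n, UnSet K A n

/-- A deterministic finite automaton with output, over input alphabet `Δ` and
output alphabet `O`. -/
structure DFAO (Δ O : Type) : Type 1 where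
  State : Type
  [finState : Finite State]
  trans : State → Δ → State
  start : State
  out : State → O

/-- The output of a DFAO on an input word, processing letters from left to right. -/
def DFAO.output {Δ O : Type} (M : DFAO Δ O) (l : List Δ) : O :=
  M.out (l.foldl M.trans M.start)

/-- `ξ ∈ A^{I_K}` is automatic if some DFAO with input alphabet `P_K` and output
alphabet `A` produces `ξ_a` from every word of primes whose product is `a`. -/
def IsAutomatic {K : Type} [Field K] [NumberField K] {A : Type}
    (ξ : IK K → A) : Prop :=
  ∃ M : DFAO (PrimeIdeal K) A, ∀ (l : List (PrimeIdeal K)) (a : IK K),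
    (a : Ideal (𝓞 K)) = (l.map Subtype.val).prod → ξ a = M.output l

/-- `v_p(a)`: the largest `e` such that `p^e` divides `a`. -/
def vIdeal {R : Type} [CommRing R] (p a : Ideal R) : ℕ :=
  sSup {e : ℕ | p ^ e ∣ a}

lemma vIdeal_eq_multiplicity {R : Type} [CommRing R] {p a : Ideal R}
    (h : FiniteMultiplicity p a) : vIdeal p a = multiplicity p a := by
  have hbdd : BddAbove {e : ℕ | p ^ e ∣ a} :=
    ⟨multiplicity p a, fun _ he => h.le_multiplicity_of_pow_dvd he⟩
  refine le_antisymm (csSup_le ⟨0, by simp⟩ fun _ he => h.le_multiplicity_of_pow_dvd he) ?_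
  exact le_csSup hbdd (pow_multiplicity_dvd p a)

lemma vIdeal_eq_zero_of_not_dvd {R : Type} [CommRing R] {q a : Ideal R} (h : ¬ q ∣ a) :
    vIdeal q a = 0 := by
  rw [vIdeal_eq_multiplicity ⟨0, by rwa [zero_add, pow_one]⟩, multiplicity_eq_zero.mpr h]

section Dedekind

variable {R : Type} [CommRing R] [IsDedekindDomain R]

lemma vIdeal_mul {q a b : Ideal R} (hq : Prime q) (ha : a ≠ ⊥) (hb : b ≠ ⊥) :
    vIdeal q (a * b) = vIdeal q a + vIdeal q b := by
  have hfin : ∀ {c : Ideal R}, c ≠ ⊥ → FiniteMultiplicity q c :=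
    fun hc => .of_not_isUnit hq.not_isUnit hc
  have hab := hfin (mul_ne_zero ha hb)
  rw [vIdeal_eq_multiplicity hab, vIdeal_eq_multiplicity (hfin ha),
    vIdeal_eq_multiplicity (hfin hb), multiplicity_mul hq hab]

lemma vIdeal_self {q : Ideal R} (hq : Prime q) : vIdeal q q = 1 := by
  rw [vIdeal_eq_multiplicity (.of_not_isUnit hq.not_isUnit hq.ne_zero), multiplicity_self]

end Dedekind

-- Also true when `R ⧸ p` is infinite, since `Nat.card` is then `0`.
lemma natCast_residueCard_mem {R : Type} [CommRing R] (p : Ideal R) :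
    (residueCard p : R) ∈ p := by
  rw [← Ideal.Quotient.eq_zero_iff_mem, map_natCast, residueCard]
  cases finite_or_infinite (R ⧸ p)
  · have := Fintype.ofFinite (R ⧸ p)
    rw [Nat.card_eq_fintype_card]
    exact Nat.cast_card_eq_zero _
  · rw [Nat.card_eq_zero_of_infinite, Nat.cast_zero]

lemma Ideal.pow_sub_pow_mem_pow_add_two {R : Type} [CommRing R] {I : Ideal R} {x y : R}
    {k N : ℕ} (hxy : x - y ∈ I ^ (k + 1)) (hN : (N : R) ∈ I) :
    x ^ N - y ^ N ∈ I ^ (k + 2) := by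
  have hgeom : ∑ i ∈ Finset.range N, x ^ i * y ^ (N - 1 - i) ∈ I := by
    have hxy' : Ideal.Quotient.mk I x = Ideal.Quotient.mk I y :=
      Ideal.Quotient.eq.2 (Ideal.pow_le_self k.succ_ne_zero hxy)
    rw [← Ideal.Quotient.eq_zero_iff_mem, RingHom.map_geom_sum₂, hxy', geom_sum₂_self,
      ← map_natCast (Ideal.Quotient.mk I), Ideal.Quotient.eq_zero_iff_mem.2 hN, zero_mul]
  rw [← geom_sum₂_mul, mul_comm, pow_succ]
  exact Ideal.mul_mem_mul hxy hgeom

lemma Ideal.pow_sub_pow_mem {R : Type} [CommRing R] {I : Ideal R} {x y : R}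
    (hxy : x - y ∈ I) (N : ℕ) : x ^ N - y ^ N ∈ I :=
  I.mem_of_dvd (sub_dvd_pow_sub_pow x y N) hxy

namespace PrimeIdeal

variable {K : Type} [Field K] [NumberField K]

lemma prime (q : PrimeIdeal K) : Prime q.1 :=
  Ideal.prime_of_isPrime q.2.2 q.2.1

lemma not_dvd_of_ne {p q : PrimeIdeal K} (h : q.1 ≠ p.1) : ¬ q.1 ∣ p.1 := by
  rw [Ideal.dvd_iff_le]
  exact fun hle => h ((p.2.1.isMaximal p.2.2).eq_of_le q.2.1.ne_top hle).symm

lemma vIdeal_toIK_mul_self (q : PrimeIdeal K) (a : IK K) :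
    vIdeal q.1 ((q.toIK * a : IK K) : Ideal (𝓞 K)) = 1 + vIdeal q.1 a := by
  rw [← vIdeal_self q.prime]
  exact vIdeal_mul q.prime q.2.2 a.2

lemma vIdeal_toIK_mul_of_ne {p q : PrimeIdeal K} (h : q.1 ≠ p.1) (a : IK K) :
    vIdeal q.1 ((p.toIK * a : IK K) : Ideal (𝓞 K)) = vIdeal q.1 a := by
  rw [← zero_add (vIdeal q.1 a), ← vIdeal_eq_zero_of_not_dvd (not_dvd_of_ne h)]
  exact vIdeal_mul q.prime p.2.2 a.2

end PrimeIdeal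

/-- if `ξ ∈ O_K^{I_K}` satisfies `ξ_{q·b} ≡ ξ_b (mod q^{1+v_q(b)})` for all
primes `q` and ideals `b`, and `η := ψ_p ξ - ξ^{#k_p}`, then
(i) `η_{p·a} - η_a ∈ p^{2+v_p(a)}` and (ii) `η_{q·a} - η_a ∈ q^{1+v_q(a)}` for `q ≠ p`. -/
theorem eta_congruence (K : Type) [Field K] [NumberField K]
    (ξ : IK K → 𝓞 K)
    (hξ : ∀ (q : PrimeIdeal K) (b : IK K),
      ξ (q.toIK * b) - ξ b ∈ q.1 ^ (1 + vIdeal q.1 (b : Ideal (𝓞 K))))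
    (p : PrimeIdeal K) :
    ∀ a : IK K,
      (shift p.toIK ξ - ξ ^ residueCard p.1) (p.toIK * a)
          - (shift p.toIK ξ - ξ ^ residueCard p.1) a
        ∈ p.1 ^ (2 + vIdeal p.1 (a : Ideal (𝓞 K))) ∧
      ∀ q : PrimeIdeal K, q.1 ≠ p.1 →
        (shift p.toIK ξ - ξ ^ residueCard p.1) (q.toIK * a)
            - (shift p.toIK ξ - ξ ^ residueCard p.1) a
          ∈ q.1 ^ (1 + vIdeal q.1 (a : Ideal (𝓞 K))) := by
  intro a
  simp only [shift, Pi.sub_apply, Pi.pow_apply, sub_sub_sub_comm]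
  refine ⟨?_, fun q hqp => ?_⟩
  · have hshift := hξ p (p.toIK * a)
    rw [p.vIdeal_toIK_mul_self, ← add_assoc, one_add_one_eq_two] at hshift
    have hpow := Ideal.pow_sub_pow_mem_pow_add_two (k := vIdeal p.1 a)
      (by rw [add_comm]; exact hξ p a) (natCast_residueCard_mem p.1)
    rw [add_comm] at hpow
    exact sub_mem hshift hpow
  · have hshift := hξ q (p.toIK * a)
    rw [PrimeIdeal.vIdeal_toIK_mul_of_ne hqp, mul_left_comm] at hshift
    exact sub_mem hshift (Ideal.pow_sub_pow_mem (hξ q a) _)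

end
end

section
/- Let K be a number field, K̄ an algebraic closure of K, and O_K̄ the integral closure of O_K in K̄. If ξ ∈ W_{O_K}(O_K̄) is a Witt vector all of whose coefficients ξ_a lie in O_L for some finite subextension L/K of K̄/K (with ring of integers O_L), then ξ, regarded as an element of O_L^{I_K}, belongs to W_{O_K}(O_L). That is, O_L^{I_K} ∩ W_{O_K}(O_K̄) ⊆ W_{O_K}(O_L). -/
open NumberField

noncomputable section

/-- The ring of integers `O_L = O_K̄ ∩ L` of a subextension `L/K` of `K̄/K`, as a
subalgebra of the integral closure `O_K̄` of `O_K` in `K̄`. -/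
def subRingOfIntegers (K : Type) [Field K] [NumberField K]
    (L : IntermediateField K (AlgebraicClosure K)) :
    Subalgebra (𝓞 K) ↥(integralClosure (𝓞 K) (AlgebraicClosure K)) :=
  (Subalgebra.restrictScalars (𝓞 K) L.toSubalgebra).comap
    (integralClosure (𝓞 K) (AlgebraicClosure K)).val

/-!
Each `U_n(A)` is an `O_K`-subalgebra of `A^{I_K}`: additivity of `ξ ↦ ψ_p ξ - ξ^{#k_p}` modulo
`p·U_n(A)` holds because `#k_p` is a power of the residue characteristic `ℓ ∈ p`, and
`O_K`-linearity because `c^{#k_p} ≡ c mod p`. So `p·U_n(A)` is the submodule `p • U_n(A)`.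

Descent to `O_L` is by induction on `n`. Suppose `δ := ψ_p ξ - ξ^{#k_p}` has coefficients in `O_L`
and lies in `p • U_n(O_K̄)`. Choose `0 ≠ c ∈ p` and write `(c) = p J`. For `t ∈ J` we get
`t δ = c m` with `m ∈ U_n(O_K̄)`; since `c` is invertible in `L`, the coefficients of `m` lie in
`L ∩ O_K̄ = O_L`, so `m ∈ U_n(O_L)` by induction. Hence `c δ ∈ (p J) δ ⊆ c · p • U_n(O_L)`, and
`c` cancels.
-/
section ResidueField

variable {R : Type*} [CommRing R] (p : Ideal R) [p.IsMaximal] [Finite (R ⧸ p)]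

theorem Ideal.pow_card_quotient_sub_mem (c : R) : c ^ Nat.card (R ⧸ p) - c ∈ p := by
  let := Ideal.Quotient.field p
  let := Fintype.ofFinite (R ⧸ p)
  rw [← Ideal.Quotient.eq_zero_iff_mem, map_sub, map_pow, Nat.card_eq_fintype_card,
    FiniteField.pow_card, sub_self]

theorem Ideal.exists_card_quotient_eq_prime_pow :
    ∃ ℓ f : ℕ, ℓ.Prime ∧ Nat.card (R ⧸ p) = ℓ ^ f ∧ (ℓ : R) ∈ p := by
  let := Ideal.Quotient.field p
  let := Fintype.ofFinite (R ⧸ p)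
  obtain ⟨f, hℓ, hcard⟩ := FiniteField.card (R ⧸ p) (ringChar (R ⧸ p))
  refine ⟨ringChar (R ⧸ p), f, hℓ, by rw [Nat.card_eq_fintype_card, hcard], ?_⟩
  rw [← Ideal.Quotient.eq_zero_iff_mem, map_natCast]
  exact ringChar.Nat.cast_ringChar

end ResidueField

section PrimeIdeal

variable {K : Type} [Field K] [NumberField K]

instance PrimeIdeal.isMaximal (p : PrimeIdeal K) : p.1.IsMaximal :=
  p.2.1.isMaximal p.2.2

instance PrimeIdeal.finite_quotient (p : PrimeIdeal K) : Finite (𝓞 K ⧸ p.1) :=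
  Ideal.finiteQuotientOfFreeOfNeBot _ p.2.2

end PrimeIdeal

section IdealSmulSubalgebra

variable {R B : Type*} [CommRing R] [CommRing B] [Algebra R B] (S : Subalgebra R B) (p : Ideal R)

theorem Subalgebra.mul_mem_ideal_smul {x w : B} (hx : x ∈ S)
    (hw : w ∈ p • Subalgebra.toSubmodule S) : x * w ∈ p • Subalgebra.toSubmodule S := by
  refine Submodule.smul_induction_on hw (fun r hr z hz => ?_) (fun a b ha hb => ?_)
  · rw [mul_smul_comm]
    exact Submodule.smul_mem_smul hr (S.mul_mem hx hz)
  · rw [mul_add]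
    exact add_mem ha hb

theorem Subalgebra.add_pow_sub_pow_sub_pow_mem_ideal_smul {ℓ : ℕ} (hℓ : ℓ.Prime)
    (hℓp : (ℓ : R) ∈ p) (f : ℕ) {x y : B} (hx : x ∈ S) (hy : y ∈ S) :
    (x + y) ^ ℓ ^ f - x ^ ℓ ^ f - y ^ ℓ ^ f ∈ p • Subalgebra.toSubmodule S := by
  set s := ∑ k ∈ Finset.Ioo 0 (ℓ ^ f),
    x ^ k * y ^ (ℓ ^ f - k) * (((ℓ ^ f).choose k / ℓ : ℕ) : B)
  have hs : s ∈ S := Subalgebra.sum_mem S fun k _ =>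
    S.mul_mem (S.mul_mem (S.pow_mem hx k) (S.pow_mem hy _)) (S.natCast_mem _)
  have hdefect : (x + y) ^ ℓ ^ f - x ^ ℓ ^ f - y ^ ℓ ^ f = (ℓ : R) • s := by
    rw [add_pow_prime_pow_eq' hℓ, Algebra.smul_def, map_natCast]
    ring
  rw [hdefect]
  exact Submodule.smul_mem_smul hℓp hs

end IdealSmulSubalgebra

section WittLevel

variable {K : Type} [Field K] [NumberField K] {A : Type} [CommRing A]

theorem shift_add (a : IK K) (x y : IK K → A) : shift a (x + y) = shift a x + shift a y := rfl

theorem shift_mul (a : IK K) (x y : IK K → A) : shift a (x * y) = shift a x * shift a y := rfl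

variable [Algebra (𝓞 K) A]

theorem idealMulSet_subalgebra (p : Ideal (𝓞 K)) (S : Subalgebra (𝓞 K) (IK K → A)) :
    idealMulSet p (S : Set (IK K → A)) = ↑(p • Subalgebra.toSubmodule S) := by
  unfold idealMulSet
  rw [← Subalgebra.coe_toSubmodule, Submodule.span_eq]

theorem shift_algebraMap (a : IK K) (c : 𝓞 K) :
    shift a (algebraMap (𝓞 K) (IK K → A) c) = algebraMap (𝓞 K) (IK K → A) c := rfl

variable {S : Subalgebra (𝓞 K) (IK K → A)} {p : PrimeIdeal K}

theorem shift_sub_pow_add_mem {x y : IK K → A} (hx : x ∈ S) (hy : y ∈ S)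
    (hδx : shift p.toIK x - x ^ residueCard p.1 ∈ p.1 • Subalgebra.toSubmodule S)
    (hδy : shift p.toIK y - y ^ residueCard p.1 ∈ p.1 • Subalgebra.toSubmodule S) :
    shift p.toIK (x + y) - (x + y) ^ residueCard p.1 ∈ p.1 • Subalgebra.toSubmodule S := by
  obtain ⟨ℓ, f, hℓ, hcard, hℓp⟩ := p.1.exists_card_quotient_eq_prime_pow
  rw [residueCard, hcard] at hδx hδy ⊢
  have hsplit : shift p.toIK (x + y) - (x + y) ^ ℓ ^ f =
      (shift p.toIK x - x ^ ℓ ^ f) + (shift p.toIK y - y ^ ℓ ^ f)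
        - ((x + y) ^ ℓ ^ f - x ^ ℓ ^ f - y ^ ℓ ^ f) := by
    rw [shift_add]
    ring
  rw [hsplit]
  exact sub_mem (add_mem hδx hδy) (S.add_pow_sub_pow_sub_pow_mem_ideal_smul p.1 hℓ hℓp f hx hy)

theorem shift_sub_pow_mul_mem {x y : IK K → A} (hx : x ∈ S) (hy : y ∈ S)
    (hδx : shift p.toIK x - x ^ residueCard p.1 ∈ p.1 • Subalgebra.toSubmodule S)
    (hδy : shift p.toIK y - y ^ residueCard p.1 ∈ p.1 • Subalgebra.toSubmodule S) :
    shift p.toIK (x * y) - (x * y) ^ residueCard p.1 ∈ p.1 • Subalgebra.toSubmodule S := by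
  set q := residueCard p.1
  have hsplit : shift p.toIK (x * y) - (x * y) ^ q = x ^ q * (shift p.toIK y - y ^ q)
      + y ^ q * (shift p.toIK x - x ^ q)
      + (shift p.toIK x - x ^ q) * (shift p.toIK y - y ^ q) := by
    rw [shift_mul]
    ring
  have hδxS : shift p.toIK x - x ^ q ∈ S := Submodule.smul_le_right hδx
  rw [hsplit]
  exact add_mem (add_mem (S.mul_mem_ideal_smul p.1 (S.pow_mem hx q) hδy)
    (S.mul_mem_ideal_smul p.1 (S.pow_mem hy q) hδx)) (S.mul_mem_ideal_smul p.1 hδxS hδy)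

theorem shift_sub_pow_algebraMap_mem (c : 𝓞 K) :
    shift p.toIK (algebraMap (𝓞 K) (IK K → A) c)
        - algebraMap (𝓞 K) (IK K → A) c ^ residueCard p.1 ∈ p.1 • Subalgebra.toSubmodule S := by
  have hsplit : shift p.toIK (algebraMap (𝓞 K) (IK K → A) c)
      - algebraMap (𝓞 K) (IK K → A) c ^ residueCard p.1 = -((c ^ residueCard p.1 - c) • 1) := by
    rw [shift_algebraMap, ← map_pow, Algebra.algebraMap_eq_smul_one,
      Algebra.algebraMap_eq_smul_one, sub_smul, neg_sub]
  rw [hsplit]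
  exact neg_mem (Submodule.smul_mem_smul (p.1.pow_card_quotient_sub_mem c) S.one_mem)

variable (S) in
def Subalgebra.wittSucc : Subalgebra (𝓞 K) (IK K → A) where
  carrier := {ξ | ξ ∈ S ∧ ∀ p : PrimeIdeal K,
    shift p.toIK ξ - ξ ^ residueCard p.1 ∈ p.1 • Subalgebra.toSubmodule S}
  mul_mem' hx hy :=
    ⟨S.mul_mem hx.1 hy.1, fun _ => shift_sub_pow_mul_mem hx.1 hy.1 (hx.2 _) (hy.2 _)⟩
  add_mem' hx hy :=
    ⟨S.add_mem hx.1 hy.1, fun _ => shift_sub_pow_add_mem hx.1 hy.1 (hx.2 _) (hy.2 _)⟩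
  algebraMap_mem' c := ⟨S.algebraMap_mem c, fun _ => shift_sub_pow_algebraMap_mem c⟩

variable (K A) in
def wittLevel : ℕ → Subalgebra (𝓞 K) (IK K → A)
  | 0 => ⊤
  | n + 1 => (wittLevel n).wittSucc

theorem coe_wittLevel (n : ℕ) : (wittLevel K A n : Set (IK K → A)) = UnSet K A n := by
  induction n with
  | zero => exact Algebra.coe_top
  | succ n ih =>
    simp only [UnSet, ← ih, idealMulSet_subalgebra]
    rfl

theorem span_unSet (n : ℕ) :
    Submodule.span (𝓞 K) (UnSet K A n) = Subalgebra.toSubmodule (wittLevel K A n) := by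
  rw [← coe_wittLevel, ← Subalgebra.coe_toSubmodule, Submodule.span_eq]

end WittLevel

open Pointwise in
theorem Submodule.mem_ideal_smul_of_map_mem_ideal_smul {R M N : Type*} [CommRing R]
    [AddCommGroup M] [Module R M] [AddCommGroup N] [Module R N] {ι : N →ₗ[R] M}
    (hι : Function.Injective ι) {V : Submodule R M} {W : Submodule R N}
    (hVW : ∀ y, ι y ∈ V → y ∈ W) {p J : Ideal R} {c : R} (hc : Ideal.span {c} = p * J)
    (hdiv : ∀ m, c • m ∈ LinearMap.range ι → m ∈ LinearMap.range ι)
    (hreg : IsSMulRegular N c)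
    {x : N} (hx : ι x ∈ p • V) : x ∈ p • W := by
  have hquot : ∀ t ∈ J, ∃ y ∈ W, t • x = c • y := by
    intro t ht
    have htx : t • ι x ∈ c • V := by
      rw [← Submodule.ideal_span_singleton_smul, hc, mul_comm, Submodule.mul_smul]
      exact Submodule.smul_mem_smul ht hx
    obtain ⟨m, hmV, hm⟩ := (Submodule.mem_smul_pointwise_iff_exists _ _ _).mp htx
    obtain ⟨y, rfl⟩ := hdiv m (hm ▸ ⟨t • x, map_smul ι t x⟩)
    exact ⟨y, hVW y hmV, hι (by rw [map_smul, map_smul, hm])⟩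
  have hcx : c • x ∈ (Ideal.span {c} * p) • W := by
    refine Submodule.mul_induction_on (C := fun s => s • x ∈ (Ideal.span {c} * p) • W)
      (hc ▸ Ideal.mem_span_singleton_self c)
      (fun γ hγ t ht => ?_) (fun a b ha hb => by rw [add_smul]; exact add_mem ha hb)
    obtain ⟨y, hyW, hy⟩ := hquot t ht
    rw [← smul_smul γ t x, hy, smul_smul γ c y, mul_comm γ c]
    exact Submodule.smul_mem_smul (Ideal.mul_mem_mul (Ideal.mem_span_singleton_self c) hγ) hyW
  rw [Submodule.mul_smul, Submodule.ideal_span_singleton_smul] at hcx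
  obtain ⟨w, hw, hcw⟩ := (Submodule.mem_smul_pointwise_iff_exists _ _ _).mp hcx
  exact hreg hcw ▸ hw

section Descent

variable {K : Type} [Field K] [NumberField K] {B : Type} [CommRing B] [Algebra (𝓞 K) B]
  [Module.IsTorsionFree (𝓞 K) B]

theorem mem_unSet_of_val_mem (C : Subalgebra (𝓞 K) B)
    (hC : ∀ c : 𝓞 K, c ≠ 0 → ∀ b : B, c • b ∈ C → b ∈ C) (n : ℕ) (η : IK K → C)
    (hη : (fun a => (η a : B)) ∈ UnSet K B n) : η ∈ UnSet K C n := by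
  induction n generalizing η with
  | zero => trivial
  | succ n ih =>
    refine ⟨ih η hη.1, fun p => ?_⟩
    let φ := C.val.compLeft (IK K)
    let ι := φ.toLinearMap
    have hι : Function.Injective ι := fun y z h => funext fun a => Subtype.ext (congrFun h a)
    obtain ⟨c, hcp, hc0⟩ := Submodule.exists_mem_ne_zero_of_ne_bot p.2.2
    obtain ⟨J, hJ⟩ := Ideal.dvd_iff_le.mpr ((Ideal.span_singleton_le_iff_mem _).mpr hcp)
    have hdiv : ∀ m, c • m ∈ LinearMap.range ι → m ∈ LinearMap.range ι := by
      rintro m ⟨y, hy⟩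
      refine ⟨fun a => ⟨m a, hC c hc0 (m a) ?_⟩, rfl⟩
      rw [← Pi.smul_apply, ← hy]
      exact (y a).2
    have hreg : IsSMulRegular (IK K → C) c := fun y z h => funext fun a =>
      Subtype.ext (smul_right_injective B hc0 (congrArg Subtype.val (congrFun h a)))
    have hVW : ∀ y, ι y ∈ Submodule.span (𝓞 K) (UnSet K B n) →
        y ∈ Submodule.span (𝓞 K) (UnSet K C n) := by
      intro y hy
      rw [span_unSet, Subalgebra.mem_toSubmodule, ← SetLike.mem_coe, coe_wittLevel] at hy
      exact Submodule.subset_span (ih y hy)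
    have hδ := hη.2 p
    unfold idealMulSet at hδ
    refine Submodule.mem_ideal_smul_of_map_mem_ideal_smul hι hVW hJ hdiv hreg ?_
    rw [AlgHom.toLinearMap_apply, map_sub, map_pow]
    exact hδ

end Descent

theorem mem_of_smul_mem_subRingOfIntegers {K : Type} [Field K] [NumberField K]
    (L : IntermediateField K (AlgebraicClosure K)) (c : 𝓞 K) (hc : c ≠ 0)
    (b : integralClosure (𝓞 K) (AlgebraicClosure K)) (hcb : c • b ∈ subRingOfIntegers K L) :
    b ∈ subRingOfIntegers K L := by
  have hcL : algebraMap (𝓞 K) (AlgebraicClosure K) c ∈ L := by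
    rw [IsScalarTower.algebraMap_apply (𝓞 K) K]
    exact L.algebraMap_mem _
  have hc' : algebraMap (𝓞 K) (AlgebraicClosure K) c ≠ 0 :=
    (map_ne_zero_iff _ (FaithfulSMul.algebraMap_injective _ _)).mpr hc
  change ((c • b : integralClosure (𝓞 K) (AlgebraicClosure K)) : AlgebraicClosure K) ∈ L
    at hcb
  rw [SetLike.val_smul, Algebra.smul_def] at hcb
  change (b : AlgebraicClosure K) ∈ L
  simpa [hc'] using L.mul_mem (L.inv_mem hcL) hcb

theorem witt_descend_to_finite_level_general (K : Type) [Field K] [NumberField K]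
    (L : IntermediateField K (AlgebraicClosure K))
    (ξ : IK K → ↥(integralClosure (𝓞 K) (AlgebraicClosure K)))
    (hmem : ∀ a : IK K, ξ a ∈ subRingOfIntegers K L)
    (hξ : ξ ∈ WittSet K ↥(integralClosure (𝓞 K) (AlgebraicClosure K))) :
    (fun a : IK K => (⟨ξ a, hmem a⟩ : ↥(subRingOfIntegers K L))) ∈
      WittSet K ↥(subRingOfIntegers K L) :=
  Set.mem_iInter.mpr fun n =>
    mem_unSet_of_val_mem _ (mem_of_smul_mem_subRingOfIntegers L) n _ (Set.mem_iInter.mp hξ n)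

/-- if all coefficients of `ξ ∈ W_{O_K}(O_K̄)` lie in `O_L` for a finite
subextension `L/K` of `K̄/K`, then `ξ`, regarded as an element of `O_L^{I_K}`, belongs
to `W_{O_K}(O_L)`; i.e. `O_L^{I_K} ∩ W_{O_K}(O_K̄) ⊆ W_{O_K}(O_L)`. -/
theorem witt_descend_to_finite_level (K : Type) [Field K] [NumberField K]
    (L : IntermediateField K (AlgebraicClosure K)) [FiniteDimensional K ↥L]
    (ξ : IK K → ↥(integralClosure (𝓞 K) (AlgebraicClosure K)))
    (hmem : ∀ a : IK K, ξ a ∈ subRingOfIntegers K L)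
    (hξ : ξ ∈ WittSet K ↥(integralClosure (𝓞 K) (AlgebraicClosure K))) :
    (fun a : IK K => (⟨ξ a, hmem a⟩ : ↥(subRingOfIntegers K L))) ∈
      WittSet K ↥(subRingOfIntegers K L) :=
  witt_descend_to_finite_level_general K L ξ hmem hξ

end
end
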